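/- Let (V, Q) be an FBAS with top tier T. If every minimal quorum Û of (V, Q) satisfies 2·|Û| > |T|, then (V, Q) enjoys quorum intersection, i.e., any two quorums of (V, Q) share a node. -/

import Mathlib

open Finset

variable {α : Type*} [DecidableEq α]

/-- `U` is a quorum of the FBAS `(V, Q)`: a nonempty subset of `V` containing,
for every member `v`, some slice `q ∈ Q v` with `q ⊆ U`. -/
def IsQuorum (V : Finset α) (Q : α → Finset (Finset α)) (U : Finset α) : Prop :=
  U ⊆ V ∧ U.Nonempty ∧ ∀ v ∈ U, ∃ q ∈ Q v, q ⊆ U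

/-- A minimal quorum: a quorum none of whose proper subsets is a quorum. -/
def IsMinimalQuorum (V : Finset α) (Q : α → Finset (Finset α)) (U : Finset α) : Prop :=
  IsQuorum V Q U ∧ ∀ U' ⊂ U, ¬IsQuorum V Q U'

/-- A blocking set: a subset of `V` intersecting every quorum of `(V, Q)`. -/
def IsBlocking (V : Finset α) (Q : α → Finset (Finset α)) (B : Finset α) : Prop :=
  B ⊆ V ∧ ∀ U, IsQuorum V Q U → (B ∩ U).Nonempty

/-- A minimal blocking set: a blocking set none of whose proper subsets is blocking. -/
def IsMinimalBlocking (V : Finset α) (Q : α → Finset (Finset α)) (B : Finset α) : Prop :=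
  IsBlocking V Q B ∧ ∀ B' ⊂ B, ¬IsBlocking V Q B'

/-- A splitting set: a subset of `V` containing the intersection of two distinct quorums. -/
def IsSplitting (V : Finset α) (Q : α → Finset (Finset α)) (S : Finset α) : Prop :=
  S ⊆ V ∧ ∃ U₁ U₂, IsQuorum V Q U₁ ∧ IsQuorum V Q U₂ ∧ U₁ ≠ U₂ ∧ U₁ ∩ U₂ ⊆ S

/-- A minimal splitting set: a splitting set none of whose proper subsets is splitting. -/
def IsMinimalSplitting (V : Finset α) (Q : α → Finset (Finset α)) (S : Finset α) : Prop :=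
  IsSplitting V Q S ∧ ∀ S' ⊂ S, ¬IsSplitting V Q S'

/-- Well-formedness of an FBAS `(V, Q)`: every slice of every node `v ∈ V`
contains `v` and is a subset of `V`. -/
def WellFormed (V : Finset α) (Q : α → Finset (Finset α)) : Prop :=
  ∀ v ∈ V, ∀ q ∈ Q v, v ∈ q ∧ q ⊆ V

/-- `T` is the top tier of `(V, Q)`: the union of all minimal quorums. -/
def IsTopTier (V : Finset α) (Q : α → Finset (Finset α)) (T : Finset α) : Prop :=
  ∀ v, v ∈ T ↔ ∃ U, IsMinimalQuorum V Q U ∧ v ∈ U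

/-- `(V, Q)` enjoys quorum intersection: any two quorums share a node. -/
def QuorumIntersection (V : Finset α) (Q : α → Finset (Finset α)) : Prop :=
  ∀ U₁ U₂, IsQuorum V Q U₁ → IsQuorum V Q U₂ → (U₁ ∩ U₂).Nonempty

/-
Every quorum contains a minimal quorum, and every minimal quorum lies in the top tier `T`. Two
minimal quorums, each with more than `|T| / 2` nodes of `T`, must therefore share a node, and so
must any two quorums containing them.
-/

section

variable {β : Type*} {V : Finset β} {Q : β → Finset (Finset β)}

lemma isMinimalQuorum_iff_minimal {U : Finset β} :
    IsMinimalQuorum V Q U ↔ Minimal (IsQuorum V Q) U :=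
  minimal_iff_forall_lt.symm

lemma IsQuorum.exists_isMinimalQuorum_subset {U : Finset β} (hU : IsQuorum V Q U) :
    ∃ Um ⊆ U, IsMinimalQuorum V Q Um := by
  obtain ⟨Um, hsub, hmin⟩ := exists_minimal_le_of_wellFoundedLT (IsQuorum V Q) U hU
  exact ⟨Um, hsub, isMinimalQuorum_iff_minimal.mpr hmin⟩

lemma IsMinimalQuorum.subset_of_isTopTier {T U : Finset β} (hT : IsTopTier V Q T)
    (hU : IsMinimalQuorum V Q U) : U ⊆ T :=
  fun v hv => (hT v).mpr ⟨U, hU, hv⟩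

lemma IsMinimalQuorum.inter_nonempty_of_card [DecidableEq β] {T M₁ M₂ : Finset β}
    (hT : IsTopTier V Q T) (hM₁ : IsMinimalQuorum V Q M₁) (hM₂ : IsMinimalQuorum V Q M₂)
    (h₁ : 2 * M₁.card > T.card) (h₂ : 2 * M₂.card > T.card) : (M₁ ∩ M₂).Nonempty :=
  inter_nonempty_of_card_lt_card_add_card (hM₁.subset_of_isTopTier hT)
    (hM₂.subset_of_isTopTier hT) (by omega)

end

theorem large_minimal_quorums_imply_intersection_general
    (V : Finset α) (Q : α → Finset (Finset α))
    (T : Finset α) (hT : IsTopTier V Q T)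
    (hbig : ∀ Um, IsMinimalQuorum V Q Um → 2 * Um.card > T.card) :
    QuorumIntersection V Q := by
  intro U₁ U₂ h₁ h₂
  obtain ⟨M₁, hM₁U₁, hM₁⟩ := h₁.exists_isMinimalQuorum_subset
  obtain ⟨M₂, hM₂U₂, hM₂⟩ := h₂.exists_isMinimalQuorum_subset
  exact (hM₁.inter_nonempty_of_card hT hM₂ (hbig M₁ hM₁) (hbig M₂ hM₂)).mono
    (inter_subset_inter hM₁U₁ hM₂U₂)

/-- if every minimal quorum contains more than half of the top
tier, then the FBAS enjoys quorum intersection. -/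
theorem large_minimal_quorums_imply_intersection
    (V : Finset α) (Q : α → Finset (Finset α)) (hwf : WellFormed V Q)
    (T : Finset α) (hT : IsTopTier V Q T)
    (hbig : ∀ Um, IsMinimalQuorum V Q Um → 2 * Um.card > T.card) :
    QuorumIntersection V Q :=
  large_minimal_quorums_imply_intersection_general V Q T hT hbig
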